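/- Connective constant via escape probability: under the hypotheses that the infinite SAW η^∞ exists and satisfies P(η^∞[0,k]=ζ) = μ^{−k} P(η^∞ escapes ζ) for all finite self-avoiding paths ζ, one has μ = 2d · P(0 ∉ η^∞[1,∞) | η^∞(0) = e) for any neighbour e of the origin, and more generally μ^k = c_k · P(η^∞[1,∞) ∩ η^k[1,k] = ∅) where η^k is an independent uniform k-step SAW. -/

import Mathlib

/-!
The cylinder events `{η^∞[0,k] = ζ}`, `ζ ∈ SAW_k`, partition the support of `η^∞`, so multiplying
the domain Markov identity by `μ^k` and summing over `ζ` gives `μ^k = ∑_ζ P(η^∞ escapes ζ)`.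
Escaping `ζ` from its endpoint is the same as avoiding the reversal of `ζ`, translated to start at
the origin, and reversal permutes `SAW_k`. For `k = 1` the `c_1 = 2d` terms all equal the same
escape probability by the symmetry hypothesis.
-/

open MeasureTheory Filter Topology

/-- `x` and `y` are nearest neighbours in `ℤ^d`. -/
def IsNbr (d : ℕ) (x y : Fin d → ℤ) : Prop :=
  (∑ j, (x j - y j).natAbs) = 1

/-- Self-avoiding paths of length `n` in `ℤ^d` started at the origin,
encoded as functions `ℕ → ℤ^d` frozen after time `n`. -/
def SAWset (d n : ℕ) : Set (ℕ → Fin d → ℤ) :=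
  {ω | ω 0 = 0 ∧ (∀ i < n, IsNbr d (ω (i + 1)) (ω i)) ∧
    (∀ i ≤ n, ∀ j ≤ n, ω i = ω j → i = j) ∧ ∀ i, n ≤ i → ω i = ω n}

/-- The number `c_n` of `n`-step self-avoiding paths. -/
noncomputable def cSAW (d n : ℕ) : ℕ := Nat.card (SAWset d n)

/-- The cylinder event that a path starts with `ζ` up to time `k`. -/
def startSet (d k : ℕ) (ζ : ℕ → Fin d → ℤ) : Set (ℕ → Fin d → ℤ) :=
  {ω | ∀ i ≤ k, ω i = ζ i}

/-- The event that a path (translated to start at `ζ k`) escapes `ζ`. -/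
def escSet (d k : ℕ) (ζ : ℕ → Fin d → ℤ) : Set (ℕ → Fin d → ℤ) :=
  {ω | ∀ i, 1 ≤ i → ∀ j ≤ k, ω i + ζ k ≠ ζ j}

/-- `c_m(ζ)`: the number of `m`-step self-avoiding paths starting with `ζ`. -/
noncomputable def cExt (d m k : ℕ) (ζ : ℕ → Fin d → ℤ) : ℕ :=
  Nat.card ((SAWset d m ∩ startSet d k ζ : Set (ℕ → Fin d → ℤ)))

/-- Infinite self-avoiding paths started at the origin. -/
def InfSAW (d : ℕ) : Set (ℕ → Fin d → ℤ) :=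
  {ω | ω 0 = 0 ∧ (∀ i, IsNbr d (ω (i + 1)) (ω i)) ∧ Function.Injective ω}

/-- The `m`-fold shift `T^m`: `(T^m ω)(i) = ω(m+i) − ω(m)`. -/
def shiftW (d m : ℕ) (ω : ℕ → Fin d → ℤ) : ℕ → Fin d → ℤ :=
  fun i => ω (m + i) - ω m

/-- The shift operator `T`. -/
def Tsh (d : ℕ) (ω : ℕ → Fin d → ℤ) : ℕ → Fin d → ℤ :=
  fun i => ω (i + 1) - ω 1

section Lattice

variable {d : ℕ}

theorem IsNbr.symm {x y : Fin d → ℤ} (h : IsNbr d x y) : IsNbr d y x := by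
  unfold IsNbr at h ⊢
  rw [← h]
  exact Finset.sum_congr rfl fun j _ => by rw [← Int.natAbs_neg, neg_sub]

theorem IsNbr.neg {x y : Fin d → ℤ} (h : IsNbr d x y) : IsNbr d (-x) (-y) := by
  have h' := h.symm
  unfold IsNbr at h' ⊢
  simpa only [Pi.neg_apply, neg_sub_neg] using h'

theorem IsNbr.sub_right {x y : Fin d → ℤ} (h : IsNbr d x y) (z : Fin d → ℤ) :
    IsNbr d (x - z) (y - z) := by
  simpa only [IsNbr, Pi.sub_apply, sub_sub_sub_cancel_right] using h

theorem IsNbr.natAbs_sub_le_one {x y : Fin d → ℤ} (h : IsNbr d x y) (j : Fin d) :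
    (x j - y j).natAbs ≤ 1 :=
  h ▸ Finset.single_le_sum (f := fun j => (x j - y j).natAbs) (fun _ _ => Nat.zero_le _)
    (Finset.mem_univ j)

theorem IsNbr.ne {x y : Fin d → ℤ} (h : IsNbr d x y) : x ≠ y := by
  rintro rfl
  simp [IsNbr] at h

theorem isNbr_zero_iff {e : Fin d → ℤ} :
    IsNbr d e 0 ↔ ∃ j, ∃ s : ℤˣ, Pi.single j (s : ℤ) = e := by
  classical
  constructor
  · intro h
    simp only [IsNbr, Pi.zero_apply, sub_zero] at h
    obtain ⟨j, hj⟩ : ∃ j, e j ≠ 0 := by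
      by_contra! h0
      simp [h0] at h
    have hsplit : (e j).natAbs + ∑ k ∈ Finset.univ.erase j, (e k).natAbs = 1 :=
      (Finset.add_sum_erase _ (fun k => (e k).natAbs) (Finset.mem_univ j)).trans h
    have hpos := Int.natAbs_pos.2 hj
    have hrest : ∑ k ∈ Finset.univ.erase j, (e k).natAbs = 0 := by omega
    have hzero : ∀ k ≠ j, e k = 0 := fun k hk => Int.natAbs_eq_zero.1 <|
      Finset.sum_eq_zero_iff.1 hrest k (Finset.mem_erase.2 ⟨hk, Finset.mem_univ k⟩)
    have hj1 : (e j).natAbs = 1 := by omega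
    refine ⟨j, (Int.isUnit_iff_natAbs_eq.2 hj1).unit, funext fun k => ?_⟩
    rcases eq_or_ne k j with rfl | hk
    · simp
    · simp [Pi.single_eq_of_ne hk, hzero k hk]
  · rintro ⟨j, s, rfl⟩
    simp only [IsNbr, Pi.zero_apply, sub_zero]
    rw [Finset.sum_eq_single j (fun k _ hk => by simp [Pi.single_eq_of_ne hk]) (by simp)]
    simp

theorem injective_piSingle_units :
    Function.Injective fun p : Fin d × ℤˣ => Pi.single (M := fun _ => ℤ) p.1 (p.2 : ℤ) := by
  rintro ⟨j, s⟩ ⟨j', s'⟩ h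
  have hj := congrFun h j
  obtain rfl : j = j' := by
    by_contra hne
    simp [Pi.single_eq_of_ne hne] at hj
  simp_all [Units.ext_iff]

theorem card_isNbr_zero : Nat.card {e : Fin d → ℤ // IsNbr d e 0} = 2 * d := by
  have hrange : {e : Fin d → ℤ | IsNbr d e 0} =
      Set.range fun p : Fin d × ℤˣ => Pi.single p.1 (p.2 : ℤ) := by
    ext e
    simp [isNbr_zero_iff]
  rw [← Set.coe_ofPred, hrange, Nat.card_range_of_injective injective_piSingle_units, Nat.card_prod,
    Nat.card_eq_fintype_card (α := ℤˣ), Fintype.card_units_int]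
  simp [mul_comm]

end Lattice

namespace SAWset

variable {d k : ℕ} {ζ : ℕ → Fin d → ℤ}

theorem eq_of_forall_le_eq {ζ' : ℕ → Fin d → ℤ} (hζ : ζ ∈ SAWset d k) (hζ' : ζ' ∈ SAWset d k)
    (h : ∀ i ≤ k, ζ i = ζ' i) : ζ = ζ' := by
  funext i
  rcases le_or_gt i k with hi | hi
  · exact h i hi
  · rw [hζ.2.2.2 i hi.le, hζ'.2.2.2 i hi.le, h k le_rfl]

theorem natAbs_apply_le (hζ : ζ ∈ SAWset d k) (i : ℕ) (j : Fin d) : (ζ i j).natAbs ≤ k := by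
  obtain ⟨h0, hnbr, -, hfrozen⟩ := hζ
  have hle : ∀ i ≤ k, (ζ i j).natAbs ≤ i := by
    intro i
    induction i with
    | zero => simp [h0]
    | succ n ih =>
      intro hn
      have hstep := (hnbr n (by omega)).natAbs_sub_le_one j
      have htri := Int.natAbs_add_le (ζ (n + 1) j - ζ n j) (ζ n j)
      rw [sub_add_cancel] at htri
      have := ih (by omega)
      omega
  rcases le_or_gt i k with hi | hi
  · exact (hle i hi).trans hi
  · rw [hfrozen i hi.le]
    exact hle k le_rfl

theorem finite (d k : ℕ) : (SAWset d k).Finite := by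
  have hbox : (Set.univ.pi fun _ : Fin (k + 1) => Set.univ.pi fun _ : Fin d =>
      Set.Icc (-(k : ℤ)) k).Finite :=
    Set.Finite.pi fun _ => Set.Finite.pi fun _ => Set.finite_Icc _ _
  refine Set.Finite.of_finite_image (f := fun ζ (i : Fin (k + 1)) => ζ i) (hbox.subset ?_) ?_
  · rintro _ ⟨ζ, hζ, rfl⟩ i - j -
    have := natAbs_apply_le hζ i j
    simp only [Set.mem_Icc]
    omega
  · intro ζ hζ ζ' hζ' h
    exact eq_of_forall_le_eq hζ hζ' fun i hi => congrFun h ⟨i, by omega⟩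

end SAWset

-- Truncated subtraction: `k - i = 0` for `i ≥ k`, so the reversal is again frozen after time `k`.
def reversePath {d : ℕ} (k : ℕ) (ζ : ℕ → Fin d → ℤ) : ℕ → Fin d → ℤ :=
  fun i => ζ (k - i) - ζ k

namespace SAWset

variable {d k : ℕ} {ζ : ℕ → Fin d → ℤ}

theorem reversePath_mem (hζ : ζ ∈ SAWset d k) : reversePath k ζ ∈ SAWset d k := by
  obtain ⟨-, hnbr, hinj, -⟩ := hζ
  refine ⟨by simp [reversePath], fun i hi => ?_, fun i hi j hj h => ?_, fun i hi => ?_⟩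
  · have h := (hnbr (k - (i + 1)) (by omega)).symm.sub_right (ζ k)
    rwa [show k - (i + 1) + 1 = k - i by omega] at h
  · have := hinj (k - i) (Nat.sub_le _ _) (k - j) (Nat.sub_le _ _) (sub_left_inj.mp h)
    omega
  · simp [reversePath, Nat.sub_eq_zero_of_le hi]

theorem reversePath_reversePath (hζ : ζ ∈ SAWset d k) : reversePath k (reversePath k ζ) = ζ := by
  refine eq_of_forall_le_eq (reversePath_mem (reversePath_mem hζ)) hζ fun i hi => ?_
  simp [reversePath, Nat.sub_sub_self hi, hζ.1]

theorem bijOn_reversePath (d k : ℕ) :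
    Set.BijOn (reversePath k) (SAWset d k) (SAWset d k) :=
  Set.InvOn.bijOn ⟨fun _ => reversePath_reversePath, fun _ => reversePath_reversePath⟩
    (fun _ => reversePath_mem) (fun _ => reversePath_mem)

def oneStepEquiv (d : ℕ) : SAWset d 1 ≃ {e : Fin d → ℤ // IsNbr d e 0} where
  toFun ζ := ⟨ζ.1 1, by simpa [ζ.2.1] using ζ.2.2.1 0 one_pos⟩
  invFun e := ⟨fun i => if i = 0 then 0 else e.1, by
    refine ⟨rfl, fun i hi => ?_, fun i hi j hj h => ?_, fun i hi => ?_⟩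
    · obtain rfl : i = 0 := by omega
      simpa using e.2
    · have := e.2.ne
      interval_cases i <;> interval_cases j <;> simp_all
    · simp [Nat.one_le_iff_ne_zero.1 hi]⟩
  left_inv ζ := Subtype.ext <| funext fun i => by
    rcases Nat.eq_zero_or_pos i with rfl | hi
    · simp [ζ.2.1]
    · simp [Nat.pos_iff_ne_zero.1 hi, ζ.2.2.2.2 i hi]
  right_inv e := by simp

end SAWset

theorem cSAW_one (d : ℕ) : cSAW d 1 = 2 * d :=
  (Nat.card_congr (SAWset.oneStepEquiv d)).trans card_isNbr_zero

/-- `η[1,∞) ∩ ζ[1,k] = ∅`. -/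
def avoidSet (d k : ℕ) (ζ : ℕ → Fin d → ℤ) : Set (ℕ → Fin d → ℤ) :=
  {ω | ∀ i, 1 ≤ i → ∀ j, 1 ≤ j → j ≤ k → ω i ≠ ζ j}

theorem avoidSet_one {d : ℕ} (ζ : ℕ → Fin d → ℤ) :
    avoidSet d 1 ζ = {ω | ∀ i, 1 ≤ i → ω i ≠ ζ 1} := by
  ext ω
  refine ⟨fun h i hi => h i hi 1 le_rfl le_rfl, fun h i hi j hj₁ hj₂ => ?_⟩
  obtain rfl : j = 1 := by omega
  exact h i hi

section InfiniteSAW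

variable {d : ℕ}

theorem measurableSet_setOf_apply_apply {α : Type*} [MeasurableSpace α] [Countable α]
    [MeasurableSingletonClass α] (i j : ℕ) (p : α → α → Prop) :
    MeasurableSet {ω : ℕ → α | p (ω i) (ω j)} := by
  have hm : Measurable fun ω : ℕ → α => (ω i, ω j) :=
    (measurable_pi_apply i).prodMk (measurable_pi_apply j)
  exact hm (Set.to_countable {q | p q.1 q.2}).measurableSet

theorem measurableSet_InfSAW (d : ℕ) : MeasurableSet (InfSAW d) := by
  have h : InfSAW d = {ω | ω 0 = 0} ∩ ((⋂ i, {ω | IsNbr d (ω (i + 1)) (ω i)}) ∩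
      ⋂ i, ⋂ j, {ω | ω i = ω j → i = j}) := by
    ext ω
    simp [InfSAW, Function.Injective]
  rw [h]
  exact (measurableSet_setOf_apply_apply 0 0 fun x _ => x = 0).inter
    ((MeasurableSet.iInter fun i => measurableSet_setOf_apply_apply _ _ _).inter
      (MeasurableSet.iInter fun i => MeasurableSet.iInter fun j =>
        measurableSet_setOf_apply_apply i j fun x y => x = y → i = j))

theorem measurableSet_startSet (k : ℕ) (ζ : ℕ → Fin d → ℤ) : MeasurableSet (startSet d k ζ) := by
  have h : startSet d k ζ = ⋂ i ∈ Set.Iic k, {ω | ω i = ζ i} := by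
    ext ω
    simp [startSet]
  rw [h]
  exact MeasurableSet.biInter (Set.to_countable _) fun i _ =>
    measurableSet_setOf_apply_apply i i fun x _ => x = ζ i

namespace InfSAW

variable {ω : ℕ → Fin d → ℤ}

theorem apply_ne_zero (hω : ω ∈ InfSAW d) {i : ℕ} (hi : 1 ≤ i) : ω i ≠ 0 := fun h => by
  have := hω.2.2 (h.trans hω.1.symm)
  omega

theorem exists_mem_startSet (hω : ω ∈ InfSAW d) (k : ℕ) :
    ∃ ζ ∈ SAWset d k, ω ∈ startSet d k ζ := by
  obtain ⟨h0, hnbr, hinj⟩ := hω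
  refine ⟨fun i => ω (min i k), ⟨by simpa using h0, fun i hi => ?_, fun i hi j hj h => ?_,
    fun i hi => by simp [hi]⟩, fun i hi => by simp [hi]⟩
  · simpa [min_eq_left (Nat.succ_le_of_lt hi), min_eq_left hi.le] using hnbr i
  · simpa [min_eq_left hi, min_eq_left hj] using hinj h

theorem escSet_inter {k : ℕ} {ζ : ℕ → Fin d → ℤ} (hζ : ζ ∈ SAWset d k) :
    escSet d k ζ ∩ InfSAW d = avoidSet d k (reversePath k ζ) ∩ InfSAW d := by
  ext ω
  simp only [Set.mem_inter_iff, and_congr_left_iff]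
  intro hω
  simp only [escSet, avoidSet, reversePath, Set.mem_ofPred_eq]
  constructor
  · intro hesc i hi j hj₁ hjk h
    exact hesc i hi (k - j) (Nat.sub_le _ _) (by rw [h, sub_add_cancel])
  · intro havoid i hi j hj h
    rcases hj.eq_or_lt with rfl | hjk
    · exact apply_ne_zero hω hi (add_eq_right.mp h)
    · exact havoid i hi (k - j) (by omega) (by omega) (by rw [Nat.sub_sub_self hj, ← h, add_sub_cancel_right])

end InfSAW

end InfiniteSAW

theorem SAWset.pairwiseDisjoint_startSet (d k : ℕ) :
    (SAWset d k).PairwiseDisjoint (startSet d k) := fun _ hζ _ hζ' hne =>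
  Set.disjoint_left.2 fun _ hω hω' =>
    hne (SAWset.eq_of_forall_le_eq hζ hζ' fun i hi => (hω i hi).symm.trans (hω' i hi))

section Measure

variable {d : ℕ} {P : Measure (ℕ → Fin d → ℤ)} [IsProbabilityMeasure P]

theorem finsum_measure_startSet (hsupp : P (InfSAW d) = 1) (k : ℕ) :
    ∑ᶠ ζ ∈ SAWset d k, (P (startSet d k ζ)).toReal = 1 := by
  have hfin := SAWset.finite d k
  have hunion : P (⋃ ζ ∈ hfin.toFinset, startSet d k ζ) = 1 := by
    refine le_antisymm prob_le_one (hsupp ▸ measure_mono fun ω hω => ?_)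
    obtain ⟨ζ, hζ, hωζ⟩ := InfSAW.exists_mem_startSet hω k
    exact Set.mem_biUnion (hfin.mem_toFinset.2 hζ) hωζ
  rw [finsum_mem_eq_finite_toFinset_sum _ hfin, ← ENNReal.toReal_sum fun _ _ => measure_ne_top _ _,
    ← measure_biUnion_finset (hfin.coe_toFinset.symm ▸ SAWset.pairwiseDisjoint_startSet d k)
      fun ζ _ => measurableSet_startSet k ζ, hunion, ENNReal.toReal_one]

theorem measure_escSet (hsupp : P (InfSAW d) = 1) {k : ℕ} {ζ : ℕ → Fin d → ℤ}
    (hζ : ζ ∈ SAWset d k) : P (escSet d k ζ) = P (avoidSet d k (reversePath k ζ)) := by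
  have hnull : P (InfSAW d)ᶜ = 0 := (prob_compl_eq_zero_iff (measurableSet_InfSAW d)).2 hsupp
  rw [← measure_inter_conull hnull, InfSAW.escSet_inter hζ, measure_inter_conull hnull]

theorem pow_eq_finsum_measure_avoidSet {μ : ℝ} (hμ : μ ≠ 0) (hsupp : P (InfSAW d) = 1)
    (hdmp : ∀ k (ζ : ℕ → Fin d → ℤ), ζ ∈ SAWset d k →
      (P (startSet d k ζ)).toReal = μ⁻¹ ^ k * (P (escSet d k ζ)).toReal) (k : ℕ) :
    μ ^ k = ∑ᶠ ζ ∈ SAWset d k, (P (avoidSet d k ζ)).toReal :=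
  calc μ ^ k = μ ^ k * ∑ᶠ ζ ∈ SAWset d k, (P (startSet d k ζ)).toReal := by
        rw [finsum_measure_startSet hsupp, mul_one]
    _ = ∑ᶠ ζ ∈ SAWset d k, (P (escSet d k ζ)).toReal := by
        rw [mul_finsum_mem]
        refine finsum_mem_congr rfl fun ζ hζ => ?_
        rw [hdmp k ζ hζ, ← mul_assoc, ← mul_pow, mul_inv_cancel₀ hμ, one_pow, one_mul]
    _ = ∑ᶠ ζ ∈ SAWset d k, (P (avoidSet d k (reversePath k ζ))).toReal :=
        finsum_mem_congr rfl fun ζ hζ => by rw [measure_escSet hsupp hζ]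
    _ = ∑ᶠ ζ ∈ SAWset d k, (P (avoidSet d k ζ)).toReal :=
        finsum_mem_eq_of_bijOn _ (SAWset.bijOn_reversePath d k) fun _ _ => rfl

end Measure

theorem connective_constant_escape_general (d : ℕ)
    (P : Measure (ℕ → Fin d → ℤ)) [IsProbabilityMeasure P]
    (μ : ℝ) (hμ : 0 < μ) (hsupp : P (InfSAW d) = 1)
    (hdmp : ∀ k (ζ : ℕ → Fin d → ℤ), ζ ∈ SAWset d k →
      (P (startSet d k ζ)).toReal = μ⁻¹ ^ k * (P (escSet d k ζ)).toReal)
    (hsym : ∀ e₁ e₂ : Fin d → ℤ, IsNbr d e₁ 0 → IsNbr d e₂ 0 →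
      P {ω | ∀ i, 1 ≤ i → ω i ≠ -e₁} = P {ω | ∀ i, 1 ≤ i → ω i ≠ -e₂}) :
    (∀ e : Fin d → ℤ, IsNbr d e 0 →
      μ = 2 * d * (P {ω | ∀ i, 1 ≤ i → ω i ≠ -e}).toReal) ∧
    ∀ k : ℕ, μ ^ k = ∑ᶠ ζ ∈ SAWset d k,
      (P {ω | ∀ i, 1 ≤ i → ∀ j, 1 ≤ j → j ≤ k → ω i ≠ ζ j}).toReal := by
  have hpow := pow_eq_finsum_measure_avoidSet hμ.ne' hsupp hdmp
  refine ⟨fun e he => ?_, hpow⟩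
  have hterm : ∀ ζ ∈ SAWset d 1, (P (avoidSet d 1 ζ)).toReal =
      (P {ω | ∀ i, 1 ≤ i → ω i ≠ -e}).toReal := fun ζ hζ => by
    have hnbr : IsNbr d (-ζ 1) 0 := by simpa [hζ.1] using (hζ.2.1 0 one_pos).neg
    rw [avoidSet_one, ← hsym _ e hnbr he, neg_neg]
  rw [← pow_one μ, hpow, finsum_mem_congr rfl hterm,
    finsum_mem_eq_finite_toFinset_sum _ (SAWset.finite d 1), Finset.sum_const, nsmul_eq_mul,
    ← Set.ncard_eq_toFinset_card _ (SAWset.finite d 1), ← Nat.card_coe_set_eq, ← cSAW, cSAW_one]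
  push_cast
  ring

/-- the connective constant via escape probabilities of the infinite SAW:
`μ = 2d · P(0 ∉ η^∞[1,∞) | η^∞(0) = e)` for every neighbour `e` of the origin
(translating so that the walk starts at `0`, this is the event `∀ i ≥ 1, η^∞(i) ≠ -e`),
and `μ^k = c_k · P(η^∞[1,∞) ∩ η^k[1,k] = ∅)` for an independent uniform `k`-step SAW
(written as the sum over `ζ ∈ SAW_k` of the avoidance probabilities). -/
theorem connective_constant_escape (d : ℕ) (hd : 0 < d)
    (P : Measure (ℕ → Fin d → ℤ)) [IsProbabilityMeasure P]
    (μ : ℝ) (hμ : 0 < μ) (hsupp : P (InfSAW d) = 1)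
    (hdmp : ∀ k (ζ : ℕ → Fin d → ℤ), ζ ∈ SAWset d k →
      (P (startSet d k ζ)).toReal = μ⁻¹ ^ k * (P (escSet d k ζ)).toReal)
    (hsym : ∀ e₁ e₂ : Fin d → ℤ, IsNbr d e₁ 0 → IsNbr d e₂ 0 →
      P {ω | ∀ i, 1 ≤ i → ω i ≠ -e₁} = P {ω | ∀ i, 1 ≤ i → ω i ≠ -e₂}) :
    (∀ e : Fin d → ℤ, IsNbr d e 0 →
      μ = 2 * d * (P {ω | ∀ i, 1 ≤ i → ω i ≠ -e}).toReal) ∧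
    ∀ k : ℕ, μ ^ k = ∑ᶠ ζ ∈ SAWset d k,
      (P {ω | ∀ i, 1 ≤ i → ∀ j, 1 ≤ j → j ≤ k → ω i ≠ ζ j}).toReal :=
  connective_constant_escape_general d P μ hμ hsupp hdmp hsym
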